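/- arXiv:2308.11090 — 2 statements merged into one kernel-verified Lean document; each statement's English description precedes it below -/
import Mathlib

section
/- Let K ≥ 1 and let ν₁, …, ν_K be atomless probability measures on ℝ with cumulative distribution functions F₁, …, F_K, and let G : [0,1] → ℝ be a Borel-measurable map. Then for all s, s' ∈ {1, …, K}, the pushforward of ν_s under G ∘ F_s equals the pushforward of ν_{s'} under G ∘ F_{s'}; indeed both equal the pushforward of the uniform (Lebesgue) probability measure on [0,1] under G. In particular, taking G = Σ_{s'} p_{s'} Q_{s'} with weights p_{s'} ≥ 0 summing to 1 and Q_{s'} the quantile function of ν_{s'}, the barycentric fair predictor f_B(x,s) := G(F_s(f*(x,s))) has conditional score distributions that coincide across all groups, i.e., f_B is Demographic-Parity fair: U(f_B) = 0. -/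
/-!
For an atomless `ν` the CDF `F` is continuous, so every nonempty sublevel set `{F ≤ v}` with
`v < 1` is a closed ray `Iic a` with `F a = v`; hence `ν {F ≤ v} = v` on `[0, 1]`, i.e. `F`
pushes `ν` forward to the uniform law on `[0, 1]` (probability integral transform). Composing
with `G`, every group's score law becomes the image of that one uniform law under `G`.
-/

open MeasureTheory

/-- The cumulative distribution function of a measure `ν` on `ℝ`:
`F_ν(u) = ν((-∞, u])`. -/
noncomputable def cdfF (ν : Measure ℝ) (u : ℝ) : ℝ :=
  (ν (Set.Iic u)).toReal

open ProbabilityTheory Set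

lemma cdfF_eq_cdf (ν : Measure ℝ) [IsProbabilityMeasure ν] : cdfF ν = cdf ν := by
  ext u
  rw [cdfF, cdf_eq_real, Measure.real]

namespace ProbabilityTheory

variable {ν : Measure ℝ} [IsProbabilityMeasure ν] [NullSingletonClass ν]

lemma continuous_cdf : Continuous (cdf ν) := by
  refine continuous_iff_continuousAt.2 fun x => ?_
  rw [(monotone_cdf ν).continuousAt_iff_leftLim_eq_rightLim, StieltjesFunction.rightLim_eq]
  have h := (cdf ν).measure_singleton x
  rw [measure_cdf, measure_singleton, eq_comm, ENNReal.ofReal_eq_zero, sub_nonpos] at h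
  exact le_antisymm ((monotone_cdf ν).leftLim_le le_rfl) h

lemma measure_cdf_preimage_Iic {v : ℝ} (hv : v < 1) :
    ν (cdf ν ⁻¹' Iic v) = ENNReal.ofReal v := by
  set S := cdf ν ⁻¹' Iic v
  rcases S.eq_empty_or_nonempty with hS | hS
  · have hv0 : v ≤ 0 := by
      by_contra! h
      obtain ⟨z, hz⟩ := ((tendsto_cdf_atBot ν).eventually_lt_const h).exists
      exact eq_empty_iff_forall_notMem.1 hS z hz.le
    rw [hS, measure_empty, ENNReal.ofReal_of_nonpos hv0]
  obtain ⟨b, hb⟩ := ((tendsto_cdf_atTop ν).eventually_const_lt hv).exists_forall_of_atTop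
  have hSb : BddAbove S := ⟨b, fun z hz => by
    by_contra! h
    exact (hb z h.le).not_ge hz⟩
  set a := sSup S
  have ha : a ∈ S := (isClosed_Iic.preimage continuous_cdf).csSup_mem hS hSb
  have hSa : S = Iic a :=
    Subset.antisymm (fun z hz => le_csSup hSb hz) fun z hz => (monotone_cdf ν hz).trans ha
  -- to the right of `a` the CDF exceeds `v`, so continuity forces `F a = v`
  have hFa : cdf ν a = v := by
    refine le_antisymm ha (ge_of_tendsto (continuous_cdf.continuousWithinAt (s := Ioi a))
      (eventually_nhdsWithin_of_forall fun z hz => ?_))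
    by_contra! h
    exact hz.not_ge (le_csSup hSb h.le)
  rw [hSa, ← ofReal_cdf, hFa]

theorem map_cdf_eq_volume_restrict_Icc : ν.map (cdf ν) = volume.restrict (Icc 0 1) := by
  refine Measure.ext_of_Iic _ _ fun v => ?_
  have hIcc : Iic v ∩ Icc 0 1 = Icc 0 (min v 1) := by
    ext z
    simp only [mem_inter_iff, mem_Iic, mem_Icc, le_min_iff]
    tauto
  rw [Measure.map_apply (monotone_cdf ν).measurable measurableSet_Iic,
    Measure.restrict_apply measurableSet_Iic, hIcc, Real.volume_Icc, sub_zero]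
  rcases lt_or_ge v 1 with hv | hv
  · rw [min_eq_left hv.le, measure_cdf_preimage_Iic hv]
  · have hS : cdf ν ⁻¹' Iic v = univ := eq_univ_of_forall fun z => (cdf_le_one ν z).trans hv
    rw [min_eq_right hv, hS, measure_univ, ENNReal.ofReal_one]

end ProbabilityTheory

theorem barycentric_projection_is_DP_fair_general
    (K : ℕ)
    (ν : Fin K → Measure ℝ) [∀ s, IsProbabilityMeasure (ν s)] [∀ s, NullSingletonClass (ν s)]
    (G : ℝ → ℝ) (hG : Measurable G) :
    (∀ s s' : Fin K,
        Measure.map (fun z => G (cdfF (ν s) z)) (ν s)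
          = Measure.map (fun z => G (cdfF (ν s') z)) (ν s')) ∧
    (∀ s : Fin K,
        Measure.map (fun z => G (cdfF (ν s) z)) (ν s)
          = Measure.map G (volume.restrict (Set.Icc (0 : ℝ) 1))) := by
  have h_uniform (s : Fin K) : Measure.map (fun z => G (cdfF (ν s) z)) (ν s)
      = Measure.map G (volume.restrict (Set.Icc (0 : ℝ) 1)) := by
    rw [cdfF_eq_cdf, ← Function.comp_def, ← Measure.map_map hG (monotone_cdf _).measurable,
      map_cdf_eq_volume_restrict_Icc]
  exact ⟨fun s s' => (h_uniform s).trans (h_uniform s').symm, h_uniform⟩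

/-- **Demographic-Parity fairness of the barycentric projection.**
Let `ν 1, …, ν K` be atomless probability measures on `ℝ` (the group-conditional score
distributions) with CDFs `F_s`, and let `G` be a Borel map (e.g. `G = Σ_{s'} p_{s'} Q_{s'}`,
the barycentric combination of group quantile functions).  Then the pushforward of `ν s`
under `G ∘ F_s` is the same for every group `s`; indeed each equals the pushforward under
`G` of the uniform probability measure on `[0,1]`.  Hence the fair predictor
`f_B(x, s) = G(F_s(f*(x, s)))` has the same conditional score distribution in every group,
i.e. `U(f_B) = 0`. -/
theorem barycentric_projection_is_DP_fair
    (K : ℕ) (hK : 1 ≤ K)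
    (ν : Fin K → Measure ℝ) [∀ s, IsProbabilityMeasure (ν s)] [∀ s, NullSingletonClass (ν s)]
    (G : ℝ → ℝ) (hG : Measurable G) :
    (∀ s s' : Fin K,
        Measure.map (fun z => G (cdfF (ν s) z)) (ν s)
          = Measure.map (fun z => G (cdfF (ν s') z)) (ν s')) ∧
    (∀ s : Fin K,
        Measure.map (fun z => G (cdfF (ν s) z)) (ν s)
          = Measure.map G (volume.restrict (Set.Icc (0 : ℝ) 1))) :=
  barycentric_projection_is_DP_fair_general K ν G hG
end

section
/- Under the hypotheses of the bias detection characterization — ν₁, ν₂ probability measures on ℝ with CDFs F₁, F₂ and quantile functions Q₁, Q₂; p₁, p₂ ∈ [0,1] with p₁ + p₂ = 1; s ∈ {1,2} with s̄ the other index; and z ∈ ℝ with Q_s(F_s(z)) = z — the absolute bias admits the implicit/explicit decomposition: for every w ∈ ℝ, |(p₁Q₁(F_s(z)) + p₂Q₂(F_s(z))) − z| ≤ p_{s̄} · ( |Q_{s̄}(F_s(z)) − w| + |w − z| ). In the paper's notation, with z = f*(x,s), w = f*(x,s̄) and T_{s→s̄} = Q_{s̄} ∘ F_s, this reads |d_B(x,s)|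 ≤ p_{s̄}·( |T_{s→s̄}(f*(x,s)) − f*(x,s̄)| + |f*(x,s̄) − f*(x,s)| ), decomposing the bias into an implicit part (difference between the transported score and the ceteris-paribus score) and an explicit part (difference between the ceteris-paribus score and the original score). -/
/-!
Since `Q_s(F_s z) = z`, the group-`s` term of the barycentric score contributes exactly
`p_s z`, so the bias collapses to `p_{s̄} (Q_{s̄}(F_s z) - z)`; the triangle inequality through
`w` splits this into the implicit and explicit parts.
-/

open MeasureTheory

/-- The quantile function of a measure `ν` on `ℝ`:
`Q_ν(v) = inf {u ∈ ℝ : F_ν(u) ≥ v}`. -/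
noncomputable def quantileQ (ν : Measure ℝ) (v : ℝ) : ℝ :=
  sInf {u : ℝ | v ≤ cdfF ν u}

theorem Fin.two_add_eq_add_of_ne {M : Type*} [AddCommMagma M] (g : Fin 2 → M) {i j : Fin 2}
    (h : j ≠ i) : g 0 + g 1 = g i + g j := by
  fin_cases i <;> fin_cases j <;> simp_all [add_comm]

theorem abs_affine_combination_sub_le {α : Type*} [CommRing α] [LinearOrder α]
    [IsStrictOrderedRing α] {a b x w z : α} (ha : 0 ≤ a) (hab : b + a = 1) :
    |b * z + a * x - z| ≤ a * (|x - w| + |w - z|) := by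
  have hcollapse : b * z + a * x - z = a * (x - z) := by
    rw [eq_sub_of_add_eq hab]; ring
  rw [hcollapse, abs_mul, abs_of_nonneg ha]
  exact mul_le_mul_of_nonneg_left (abs_sub_le x w z) ha

theorem bias_implicit_explicit_decomposition_general
    (ν : Fin 2 → Measure ℝ)
    (p : Fin 2 → ℝ) (hp0 : ∀ i, 0 ≤ p i)
    (hsum : p 0 + p 1 = 1)
    (s sbar : Fin 2) (hss : sbar ≠ s)
    (z : ℝ) (hz : quantileQ (ν s) (cdfF (ν s) z) = z)
    (w : ℝ) :
    |(p 0 * quantileQ (ν 0) (cdfF (ν s) z) + p 1 * quantileQ (ν 1) (cdfF (ν s) z)) - z|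
      ≤ p sbar * (|quantileQ (ν sbar) (cdfF (ν s) z) - w| + |w - z|) := by
  rw [Fin.two_add_eq_add_of_ne (fun i => p i * quantileQ (ν i) (cdfF (ν s) z)) hss, hz]
  exact abs_affine_combination_sub_le (hp0 sbar) (Fin.two_add_eq_add_of_ne p hss ▸ hsum)

/-- **Implicit/explicit decomposition of the bias.**
Under the hypotheses of the bias detection characterization (two probability measures on `ℝ`
with CDFs `F` and quantile functions `Q`, weights `p 0, p 1 ∈ [0,1]` summing to `1`, a group
`s` with other index `s̄`, and `z` with `Q_s(F_s(z)) = z`), for every `w ∈ ℝ`,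
`|d_B| = |(p 0 • Q 0 + p 1 • Q 1)(F_s(z)) − z| ≤ p_{s̄} · (|Q_{s̄}(F_s(z)) − w| + |w − z|)`.
With `z = f*(x,s)` and `w = f*(x,s̄)`, the first term is the implicit bias
`|T_{s→s̄}(f*(x,s)) − f*(x,s̄)|` and the second term the explicit bias `|f*(x,s̄) − f*(x,s)|`. -/
theorem bias_implicit_explicit_decomposition
    (ν : Fin 2 → Measure ℝ) [∀ i, IsProbabilityMeasure (ν i)]
    (p : Fin 2 → ℝ) (hp0 : ∀ i, 0 ≤ p i) (hp1 : ∀ i, p i ≤ 1)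
    (hsum : p 0 + p 1 = 1)
    (s sbar : Fin 2) (hss : sbar ≠ s)
    (z : ℝ) (hz : quantileQ (ν s) (cdfF (ν s) z) = z)
    (w : ℝ) :
    |(p 0 * quantileQ (ν 0) (cdfF (ν s) z) + p 1 * quantileQ (ν 1) (cdfF (ν s) z)) - z|
      ≤ p sbar * (|quantileQ (ν sbar) (cdfF (ν s) z) - w| + |w - z|) :=
  bias_implicit_explicit_decomposition_general ν p hp0 hsum s sbar hss z hz w
end
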